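/- For every k ∈ ℕ, coasdim(X_{ω+k}) ≤ ω + k. -/

import Mathlib

open Metric Set Filter ENNReal

noncomputable section

namespace AsympPaper

/-- The distance between two subsets of a (pseudo)metric space,
`d(A,B) = inf {dist a b : a ∈ A, b ∈ B}`, valued in `ℝ≥0∞` (it is `∞` if `A` or `B` is empty). -/
def setEDist {X : Type*} [PseudoMetricSpace X] (A B : Set X) : ℝ≥0∞ :=
  ⨅ a ∈ A, ⨅ b ∈ B, edist a b

/-- A family `𝒰` of subsets of a metric space is `r`-disjoint if `d(U,V) > r`
for all distinct `U, V ∈ 𝒰`. -/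
def RDisjoint {X : Type*} [PseudoMetricSpace X] (r : ℝ) (𝒰 : Set (Set X)) : Prop :=
  ∀ U ∈ 𝒰, ∀ V ∈ 𝒰, U ≠ V → ENNReal.ofReal r < setEDist U V

/-- A family `𝒰` of subsets of a metric space is uniformly bounded if
`sup {diam U : U ∈ 𝒰} < ∞`. -/
def UniformlyBdd {X : Type*} [PseudoMetricSpace X] (𝒰 : Set (Set X)) : Prop :=
  ∃ R : ℝ, ∀ U ∈ 𝒰, ∀ x ∈ U, ∀ y ∈ U, dist x y ≤ R

/-- `Msub M σ` is the set `M^σ = {τ ∈ Fin ℕ : τ ∪ σ ∈ M and τ ∩ σ = ∅}`,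
where `Fin ℕ` is the collection of finite nonempty subsets of `ℕ`. -/
def Msub (M : Set (Finset ℕ)) (σ : Finset ℕ) : Set (Finset ℕ) :=
  {τ | τ.Nonempty ∧ τ ∪ σ ∈ M ∧ τ ∩ σ = ∅}

/-- `OrdLE M α` is the relation `Ord M ≤ α`:  `Ord ∅ = 0` (so `Ord ∅ ≤ α` always), and for
`M ≠ ∅`, `Ord M ≤ α` iff `Ord M^a < α` for every `a ∈ ℕ`. -/
def OrdLE (M : Set (Finset ℕ)) (α : Ordinal.{0}) : Prop :=
  M = ∅ ∨ ∀ a : ℕ, ∃ β : {β : Ordinal.{0} // β < α}, OrdLE (Msub M {a}) β.1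
termination_by α
decreasing_by exact β.2

/-- `Ord M < α`. -/
def OrdLT (M : Set (Finset ℕ)) (α : Ordinal.{0}) : Prop := ∃ β < α, OrdLE M β

/-- `Ord M = α`. -/
def OrdEq (M : Set (Finset ℕ)) (α : Ordinal.{0}) : Prop := OrdLE M α ∧ ¬ OrdLT M α

/-- `A(X)`: the set of finite nonempty `σ ⊆ ℕ` such that there are *no* uniformly bounded
families `𝒰 i` for `i ∈ σ`, each `𝒰 i` being `i`-disjoint, with `⋃_{i ∈ σ} 𝒰 i` covering `X`. -/
def AX (X : Type*) [PseudoMetricSpace X] : Set (Finset ℕ) :=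
  {σ | σ.Nonempty ∧ ¬ ∃ 𝒰 : ℕ → Set (Set X),
      (∀ i ∈ σ, UniformlyBdd (𝒰 i) ∧ RDisjoint (i : ℝ) (𝒰 i)) ∧
      ∀ x : X, ∃ i ∈ σ, ∃ U ∈ 𝒰 i, x ∈ U}

/-- `trasdim(X) ≤ γ`, i.e. `Ord A(X) ≤ γ`. -/
def TrasdimLE (X : Type*) [PseudoMetricSpace X] (γ : Ordinal.{0}) : Prop := OrdLE (AX X) γ

/-- `trasdim(X) = γ`, i.e. `Ord A(X) = γ`. -/
def TrasdimEq (X : Type*) [PseudoMetricSpace X] (γ : Ordinal.{0}) : Prop := OrdEq (AX X) γ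

/-- Auxiliary for `coasdim`: `CoasdimLEAux A lam n` says `coasdim(A) ≤ lam + n` where `lam` is
a limit ordinal or `0` and `n ∈ ℕ`: for every `r > 0` there are `r`-disjoint uniformly bounded
families `𝒰 0, …, 𝒰 n` of subsets of `A` such that `coasdim(A \ ⋃ i, ⋃₀ 𝒰 i) < lam`
(where `coasdim = -1` exactly for `∅`). -/
def CoasdimLEAux {X : Type*} [PseudoMetricSpace X] (A : Set X) (lam : Ordinal.{0}) (n : ℕ) :
    Prop :=
  ∀ r : ℝ, 0 < r → ∃ 𝒰 : Fin (n + 1) → Set (Set X),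
    (∀ i, (∀ U ∈ 𝒰 i, U ⊆ A) ∧ UniformlyBdd (𝒰 i) ∧ RDisjoint r (𝒰 i)) ∧
    ((A \ ⋃ i, ⋃₀ 𝒰 i) = ∅ ∨
      ∃ q : {q : Ordinal.{0} × ℕ // q.1 + q.2 < lam ∧ (q.1 = 0 ∨ Order.IsSuccLimit q.1)},
        CoasdimLEAux (A \ ⋃ i, ⋃₀ 𝒰 i) q.1.1 q.1.2)
termination_by lam
decreasing_by exact lt_of_le_of_lt le_self_add q.2.1

/-- `coasdim(A) ≤ γ` for a subset `A` of an ambient metric space (with the induced metric). -/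
def CoasdimLE {X : Type*} [PseudoMetricSpace X] (A : Set X) (γ : Ordinal.{0}) : Prop :=
  ∃ lam : Ordinal.{0}, ∃ n : ℕ, (lam = 0 ∨ Order.IsSuccLimit lam) ∧ γ = lam + n ∧ CoasdimLEAux A lam n

/-- `coasdim(A) = γ`. -/
def CoasdimEq {X : Type*} [PseudoMetricSpace X] (A : Set X) (γ : Ordinal.{0}) : Prop :=
  CoasdimLE A γ ∧ ∀ β < γ, ¬ CoasdimLE A β

/-- `1 + 2 + ⋯ + (i-1) = i(i-1)/2`, as a real number. -/
def triHalf (i : ℕ) : ℝ := ((i * (i - 1)) / 2 : ℕ)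

/-- The asymptotic union `as⊔_{i=1}^∞ Z_i` of a sequence of subspaces `Z_i = S i` of an ambient
metric space `Z` (indices with `S i = ∅` are vacuous; in particular take `S 0 = ∅` to start
the union at `i = 1`). A point is a pair `(i, x)` with `x ∈ S i`. -/
structure AsUnion {Z : Type*} (S : ℕ → Set Z) where
  idx : ℕ
  pt : S idx

/-- The metric of the asymptotic union: `d((l,x),(k,y)) = d_Z(x,y) + c` where, for `l ≤ k`,
`c = 0` if `l = k` and `c = l + (l+1) + ⋯ + (k-1)` if `l < k`. -/
instance AsUnion.instPseudoMetricSpace {Z : Type*} [PseudoMetricSpace Z] (S : ℕ → Set Z) :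
    PseudoMetricSpace (AsUnion S) where
  dist p q := dist (p.pt : Z) (q.pt : Z) + |triHalf p.idx - triHalf q.idx|
  dist_self p := by simp
  dist_comm p q := by
    show dist (p.pt : Z) (q.pt : Z) + |triHalf p.idx - triHalf q.idx|
      = dist (q.pt : Z) (p.pt : Z) + |triHalf q.idx - triHalf p.idx|
    rw [dist_comm, abs_sub_comm]
  dist_triangle p q r := by
    show dist (p.pt : Z) (r.pt : Z) + |triHalf p.idx - triHalf r.idx|
      ≤ (dist (p.pt : Z) (q.pt : Z) + |triHalf p.idx - triHalf q.idx|)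
        + (dist (q.pt : Z) (r.pt : Z) + |triHalf q.idx - triHalf r.idx|)
    have h1 := dist_triangle (p.pt : Z) (q.pt : Z) (r.pt : Z)
    have h2 := abs_sub_le (triHalf p.idx) (triHalf q.idx) (triHalf r.idx)
    linarith

/-- The ambient space `⊕ ℝ` of sequences, realized inside the bounded
functions `ℕ →ᵇ ℝ` with the sup-metric. -/
abbrev Amb : Type := BoundedContinuousFunction ℕ ℝ

/-- `t ∈ 2^n ℤ`. -/
def IsMultiple (n : ℕ) (t : ℝ) : Prop := ∃ m : ℤ, t = (m : ℝ) * 2 ^ n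

/-- `X_{ω+k}^{(i,n)} = {x ∈ ℝ^i : #{j : x_j ∉ 2^n ℤ} ≤ k}`, realized as the subset of `⊕ ℝ`
of sequences supported on the first `i` coordinates. -/
def XSet (k i n : ℕ) : Set Amb :=
  {f | (∀ j, i ≤ j → f j = 0) ∧ ({j | j < i ∧ ¬ IsMultiple n (f j)}).ncard ≤ k}

/-- `X_{ω+k} = as⊔_{i=1}^∞ X_{ω+k}^{(i)}` where `X_{ω+k}^{(i)} = X_{ω+k}^{(i,i)}`. -/
def XOmegaPlus (k : ℕ) : Type := AsUnion (fun i => if i = 0 then (∅ : Set Amb) else XSet k i i)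

instance (k : ℕ) : PseudoMetricSpace (XOmegaPlus k) :=
  AsUnion.instPseudoMetricSpace _

/-- `as⊔_{i=n}^∞ X_{ω+k}^{(i,n)}`. -/
def XTail (k n : ℕ) : Type := AsUnion (fun i => if i < n then (∅ : Set Amb) else XSet k i n)

instance (k n : ℕ) : PseudoMetricSpace (XTail k n) :=
  AsUnion.instPseudoMetricSpace _

/-- `Y_{ω+k}^{(i)} = {x ∈ (2^k ℤ)^i : #{j : x_j ∉ 2^i ℤ} ≤ k}` inside `⊕ ℝ`. -/
def YSet (k i : ℕ) : Set Amb :=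
  {f | (∀ j, i ≤ j → f j = 0) ∧ (∀ j, j < i → IsMultiple k (f j)) ∧
    ({j | j < i ∧ ¬ IsMultiple i (f j)}).ncard ≤ k}

/-- `Y_{ω+k} = as⊔_{i=1}^∞ Y_{ω+k}^{(i)}`. -/
def YOmegaPlus (k : ℕ) : Type := AsUnion (fun i => if i = 0 then (∅ : Set Amb) else YSet k i)

instance (k : ℕ) : PseudoMetricSpace (YOmegaPlus k) :=
  AsUnion.instPseudoMetricSpace _

/-- `ℝ^i` inside `⊕ ℝ`. -/
def RSet (i : ℕ) : Set Amb := {f | ∀ j, i ≤ j → f j = 0}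

/-- The ambient space `as⊔_{i=1}^∞ ℝ^i`. -/
def AsR : Type := AsUnion (fun i => if i = 0 then (∅ : Set Amb) else RSet i)

instance : PseudoMetricSpace AsR := AsUnion.instPseudoMetricSpace _

/-- `Y_{ω+k}` viewed as a subspace of `as⊔_{i=1}^∞ ℝ^i`. -/
def YSub (k : ℕ) : Set AsR := {p | (p.pt : Amb) ∈ YSet k p.idx}

/-- `Y_{2ω} = as⊔_{k=1}^∞ Y_{ω+k}`, the `Y_{ω+k}` being subspaces of `as⊔_{i=1}^∞ ℝ^i`. -/
def Y2Omega : Type := AsUnion (fun k => if k = 0 then (∅ : Set AsR) else YSub k)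

instance : PseudoMetricSpace Y2Omega := AsUnion.instPseudoMetricSpace _

/-- A family covers the space. -/
def Covers {X : Type*} (𝒰 : Set (Set X)) : Prop := ∀ x : X, ∃ U ∈ 𝒰, x ∈ U

/-- The Lebesgue number `L(𝒰) = inf_{x ∈ X} sup {r > 0 : ∃ U ∈ 𝒰, B(x,r) ⊆ U}`,
valued in `ℝ≥0∞`. -/
def lebesgueNum {X : Type*} [PseudoMetricSpace X] (𝒰 : Set (Set X)) : ℝ≥0∞ :=
  ⨅ x : X, sSup {e : ℝ≥0∞ | ∃ r : ℝ, 0 < r ∧ e = ENNReal.ofReal r ∧ ∃ U ∈ 𝒰, Metric.ball x r ⊆ U}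

/-- The multiplicity `m(𝒰)`: the maximal number of members of `𝒰` with nonempty
intersection, valued in `ℕ∞`. -/
def covMult {X : Type*} (𝒰 : Set (Set X)) : ℕ∞ :=
  sSup {m : ℕ∞ | ∃ t : Finset (Set X), ↑t ⊆ 𝒰 ∧ (⋂₀ (t : Set (Set X))).Nonempty ∧ m = t.card}

/-- The asymptotic dimension function
`ad_X(λ) = min {m(𝒰) : 𝒰 a uniformly bounded cover of X with L(𝒰) ≥ λ} - 1`. -/
def adim (X : Type*) [PseudoMetricSpace X] (lam : ℝ) : ℕ∞ :=
  sInf {m : ℕ∞ | ∃ 𝒰 : Set (Set X), UniformlyBdd 𝒰 ∧ Covers 𝒰 ∧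
    ENNReal.ofReal lam ≤ lebesgueNum 𝒰 ∧ m = covMult 𝒰} - 1

/-- `(2^k ℤ)^n` as a subset of `ℝ^n` (the latter carrying the sup-metric). -/
def grid (k n : ℕ) : Set (Fin n → ℝ) := {x | ∀ j, IsMultiple k (x j)}

/-- `g̃(r) = max {k ∈ ℕ : ad_{(2^k ℤ)^{g(r)}}(r) = g(r)}`. -/
def gtilde (g : ℝ → ℕ) (r : ℝ) : ℕ :=
  sSup {k : ℕ | adim (grid k (g r)) r = (g r : ℕ∞)}

/-- `(2^k ℤ)^n` realized inside `⊕ ℝ`: sequences supported on the first `n` coordinates,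
with those coordinates in `2^k ℤ`. -/
def gridSet (k n : ℕ) : Set Amb :=
  {f | (∀ j, n ≤ j → f j = 0) ∧ ∀ j, j < n → IsMultiple k (f j)}

/-- `X_ω(g) = as⊔_{i=1}^∞ (2^{g̃(i)} ℤ)^{g(i)}`. -/
def XOmegaG (g : ℝ → ℕ) : Type :=
  AsUnion (fun i => if i = 0 then (∅ : Set Amb) else gridSet (gtilde g (i : ℝ)) (g (i : ℝ)))

instance (g : ℝ → ℕ) : PseudoMetricSpace (XOmegaG g) := AsUnion.instPseudoMetricSpace _

/-- `f : X → Y` is a coarse equivalence: a coarse embedding with coarsely dense image. -/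
def IsCoarseEquiv {X Y : Type*} [PseudoMetricSpace X] [PseudoMetricSpace Y] (f : X → Y) : Prop :=
  (∃ p₁ p₂ : ℝ → ℝ, Monotone p₁ ∧ Monotone p₂ ∧
      Tendsto p₁ atTop atTop ∧ Tendsto p₂ atTop atTop ∧
      ∀ x₁ x₂ : X, p₁ (dist x₁ x₂) ≤ dist (f x₁) (f x₂) ∧ dist (f x₁) (f x₂) ≤ p₂ (dist x₁ x₂)) ∧
  ∃ R : ℝ, 0 < R ∧ ∀ y : Y, ∃ x : X, dist y (f x) < R

/-- A family `𝒳` (of subsets of an ambient space) is `r`-decomposable over a family `𝒴`: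
each `A ∈ 𝒳` splits as `A = A₀ ∪ A₁`, each `A_i` being an `r`-disjoint union of members
of a subfamily of `𝒴`. -/
def RDecomp {X : Type*} [PseudoMetricSpace X] (r : ℝ) (F G : Set (Set X)) : Prop :=
  ∀ A ∈ F, ∃ A₀ A₁ : Set X, A = A₀ ∪ A₁ ∧
    (∃ P ⊆ G, A₀ = ⋃₀ P ∧ RDisjoint r P) ∧
    (∃ P ⊆ G, A₁ = ⋃₀ P ∧ RDisjoint r P)

/-- `F ∈ D_α`, finite decomposition complexity: `D_0` consists of the bounded
families, and for `α > 0`, `F ∈ D_α` iff for every `r > 0` there are `β < α` and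
`G ∈ D_β` such that `F` is `r`-decomposable over `G`. -/
def InD {X : Type*} [PseudoMetricSpace X] (F : Set (Set X)) (α : Ordinal.{0}) : Prop :=
  if α = 0 then ∃ R : ℝ, ∀ A ∈ F, ∀ x ∈ A, ∀ y ∈ A, dist x y ≤ R
  else ∀ r : ℝ, 0 < r → ∃ β : {β : Ordinal.{0} // β < α},
    ∃ G : Set (Set X), InD G β.1 ∧ RDecomp r F G
termination_by α
decreasing_by exact β.2

end AsympPaper


open AsympPaper

/-! Fix `r > 0`, choose `n` with `2ⁿ > r (k + 1)` and put `c = 2ⁿ / (k + 1)`. Colour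
`m ∈ {0, …, k}` covers `ℝ` by the intervals `[(z (k + 1) + m) c, (z (k + 1) + m + k) c]`; a real
number misses at most one colour, and multiples of `c` miss none. On a level `i ≥ 2ⁿ` of
`X_{ω+k}` all but `k` coordinates lie in `2ⁱ ℤ ⊆ c ℤ`, so some colour catches every coordinate.
The boxes of one colour have diameter `≤ k c`, are `c`-apart within a level and `2ⁿ`-apart across
levels: these are the `k + 1` families. The levels below `2ⁿ` embed coarsely in `ℝ^(2ⁿ + 1)`
(coordinates plus level offset), whose boxes coloured the same way show `coasdim < ω`. -/

namespace AsympPaper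

section Coloring

def colorInterval (K m : ℕ) (c : ℝ) (z : ℤ) : Set ℝ :=
  Icc ((z * (K + 1) + m) * c) ((z * (K + 1) + m + K) * c)

def colorBox {ι : Type*} (K m : ℕ) (c : ℝ) (z : ι → ℤ) : Set (ι → ℝ) :=
  {t | ∀ j, t j ∈ colorInterval K m c (z j)}

variable {K m : ℕ} {c t t' : ℝ}

lemma abs_sub_le_of_mem_colorInterval {z : ℤ} (ht : t ∈ colorInterval K m c z)
    (ht' : t' ∈ colorInterval K m c z) : |t - t'| ≤ K * c := by
  have h := Real.dist_le_of_mem_Icc ht ht'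
  rw [Real.dist_eq] at h
  linarith

lemma le_abs_sub_of_mem_colorInterval (hc : 0 ≤ c) {z z' : ℤ}
    (ht : t ∈ colorInterval K m c z) (ht' : t' ∈ colorInterval K m c z') (hz : z ≠ z') :
    c ≤ |t - t'| := by
  wlog hlt : z < z' generalizing t t' z z'
  · rw [abs_sub_comm]
    exact this ht' ht hz.symm (lt_of_le_of_ne (not_lt.1 hlt) hz.symm)
  have h : ((z : ℝ) + 1) * (K + 1) * c ≤ z' * (K + 1) * c := by
    gcongr
    exact_mod_cast hlt
  rw [abs_sub_comm]
  linarith [ht.2, ht'.1, le_abs_self (t' - t)]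

/-- The only colour that can miss `t` is `⌊t / c⌋ + 1` modulo `K + 1`, and it does not miss
`t` when `t ∈ c ℤ`. -/
lemma exists_mem_colorInterval (hc : 0 < c)
    (h : (∃ a : ℤ, t = a * c) ∨ ¬ ((K : ℤ) + 1) ∣ ⌊t / c⌋ + 1 - m) :
    ∃ z : ℤ, t ∈ colorInterval K m c z := by
  set N := ⌊t / c⌋
  have hNt : N * c ≤ t := by rw [← le_div_iff₀ hc]; exact Int.floor_le _
  have htN : t < (N + 1) * c := by rw [← div_lt_iff₀ hc]; exact Int.lt_floor_add_one _
  obtain ⟨hqρ, hρ0, hρK⟩ := (Int.ediv_emod_unique (a := N - m) (b := K + 1)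
    (by positivity)).mp ⟨rfl, rfl⟩
  set q := (N - m) / (K + 1)
  set ρ := (N - m) % (K + 1)
  have hkey : (q : ℝ) * (K + 1) + m = N - ρ := by
    have : (q * (K + 1) + m : ℤ) = N - ρ := by linarith
    exact_mod_cast this
  have hupper : t ≤ (N - ρ + K) * c := by
    rcases (Int.lt_add_one_iff.mp hρK).lt_or_eq with hlt | hρ
    · have : (N : ℝ) + 1 ≤ N - ρ + K := by exact_mod_cast (by omega : N + 1 ≤ N - ρ + K)
      nlinarith
    · rcases h with ⟨a, rfl⟩ | h
      · have : N = a := by simp [N, mul_div_cancel_right₀ _ hc.ne']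
        rw [hρ, this]
        simp
      · exact absurd ⟨q + 1, by linarith⟩ h
  refine ⟨q, ?_, ?_⟩
  · rw [hkey]
    nlinarith [mul_nonneg (by exact_mod_cast hρ0 : (0 : ℝ) ≤ ρ) hc.le]
  · rw [hkey]
    exact hupper

lemma exists_le_abs_sub_of_mem_colorBox {ι : Type*} (hc : 0 ≤ c) {t t' : ι → ℝ}
    {z z' : ι → ℤ} (ht : t ∈ colorBox K m c z) (ht' : t' ∈ colorBox K m c z') (hz : z ≠ z') :
    ∃ j, c ≤ |t j - t' j| := by
  obtain ⟨j, hj⟩ := Function.ne_iff.mp hz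
  exact ⟨j, le_abs_sub_of_mem_colorInterval hc (ht j) (ht' j) hj⟩

theorem exists_mem_colorBox {ι : Type*} (hc : 0 < c) (t : ι → ℝ) {J : Set ι}
    (hJ : J.Finite) (hJK : J.ncard ≤ K) (hmul : ∀ j ∉ J, ∃ a : ℤ, t j = a * c) :
    ∃ m : Fin (K + 1), ∃ z : ι → ℤ, t ∈ colorBox K m c z := by
  set miss : ι → ℤ := fun j => (⌊t j / c⌋ + 1) % (K + 1)
  obtain ⟨_, ⟨m, rfl⟩, hm⟩ : ∃ e ∈ range (fun m : Fin (K + 1) => (m : ℤ)), e ∉ miss '' J := by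
    refine Set.exists_mem_notMem_of_ncard_lt_ncard ?_ (hJ.image _)
    rw [Set.ncard_range_of_injective (fun a b h => Fin.ext (by exact_mod_cast h)),
      Nat.card_eq_fintype_card, Fintype.card_fin]
    exact (Set.ncard_image_le hJ).trans_lt (by omega)
  have hcover : ∀ j, ∃ z : ℤ, t j ∈ colorInterval K m c z := by
    intro j
    refine exists_mem_colorInterval hc ?_
    by_cases hj : j ∈ J
    · refine Or.inr fun hdvd => hm ⟨j, hj, ?_⟩
      have hmod := (Int.modEq_iff_dvd.mpr hdvd).symm
      rw [Int.ModEq, Int.emod_eq_of_lt (a := (m : ℤ)) (by positivity) (by omega)] at hmod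
      exact hmod
    · exact Or.inl (hmul j hj)
  choose z hz using hcover
  exact ⟨m, z, hz⟩

end Coloring

section Metric

variable {X : Type*} [PseudoMetricSpace X]

lemma rDisjoint_of_le_dist {r g : ℝ} {𝒰 : Set (Set X)} (hr : 0 ≤ r) (hrg : r < g)
    (h : ∀ U ∈ 𝒰, ∀ V ∈ 𝒰, U ≠ V → ∀ a ∈ U, ∀ b ∈ V, g ≤ dist a b) : RDisjoint r 𝒰 := by
  intro U hU V hV hUV
  refine lt_of_lt_of_le ((ENNReal.ofReal_lt_ofReal_iff (hr.trans_lt hrg)).mpr hrg) ?_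
  refine le_iInf₂ fun a ha => le_iInf₂ fun b hb => ?_
  rw [edist_dist]
  exact ENNReal.ofReal_le_ofReal (h U hU V hV hUV a ha b hb)

theorem coasdimLEAux_zero_of_lipschitzOnWith {A : Set X} {n : ℕ} {C : ℝ} (v : X → Fin n → ℝ)
    (hv : LipschitzOnWith 1 v A) (hC : ∀ p ∈ A, ∀ q ∈ A, dist p q ≤ C * dist (v p) (v q)) :
    CoasdimLEAux A 0 n := by
  rw [CoasdimLEAux]
  intro r hr
  have hc : 0 < 2 * r := by positivity
  refine ⟨fun m => range fun z => A ∩ v ⁻¹' colorBox n m (2 * r) z, fun m => ⟨?_, ?_, ?_⟩,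
    Or.inl ?_⟩
  · rintro _ ⟨z, rfl⟩
    exact inter_subset_left
  · refine ⟨|C| * (n * (2 * r)), ?_⟩
    rintro _ ⟨z, rfl⟩ p ⟨hpA, hp⟩ q ⟨hqA, hq⟩
    have hvpq : dist (v p) (v q) ≤ n * (2 * r) := (dist_pi_le_iff (by positivity)).2 fun j => by
      rw [Real.dist_eq]
      exact abs_sub_le_of_mem_colorInterval (hp j) (hq j)
    calc dist p q ≤ C * dist (v p) (v q) := hC p hpA q hqA
      _ ≤ |C| * dist (v p) (v q) := by gcongr; exact le_abs_self C
      _ ≤ |C| * (n * (2 * r)) := by gcongr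
  · refine rDisjoint_of_le_dist hr.le (by linarith : r < 2 * r) ?_
    rintro _ ⟨z, rfl⟩ _ ⟨z', rfl⟩ hne p ⟨hpA, hp⟩ q ⟨hqA, hq⟩
    obtain ⟨j, hj⟩ := exists_le_abs_sub_of_mem_colorBox hc.le hp hq (by rintro rfl; exact hne rfl)
    calc 2 * r ≤ dist (v p j) (v q j) := by rwa [Real.dist_eq]
      _ ≤ dist (v p) (v q) := dist_le_pi_dist _ _ j
      _ ≤ dist p q := by simpa using hv.dist_le_mul p hpA q hqA
  · rw [sdiff_eq_empty]
    intro p hp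
    obtain ⟨m, z, hz⟩ := exists_mem_colorBox (K := n) hc (v p) finite_univ (by simp) (by simp)
    exact mem_iUnion.2 ⟨m, mem_sUnion.2 ⟨_, ⟨z, rfl⟩, hp, hz⟩⟩

end Metric

lemma two_mul_triHalf (n : ℕ) : 2 * triHalf n = n * ((n : ℝ) - 1) := by
  unfold triHalf
  rw [Nat.cast_div (Nat.even_mul_pred_self n).two_dvd (by norm_num)]
  cases n with
  | zero => simp
  | succ n => push_cast [Nat.add_sub_cancel]; ring

lemma le_abs_triHalf_sub {n i j : ℕ} (hi : n ≤ i) (hj : n ≤ j) (hij : i ≠ j) :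
    (n : ℝ) ≤ |triHalf i - triHalf j| := by
  wlog hlt : i < j generalizing i j
  · rw [abs_sub_comm]
    exact this hj hi hij.symm (lt_of_le_of_ne (not_lt.1 hlt) hij.symm)
  have hi' : (n : ℝ) ≤ i := by exact_mod_cast hi
  have hij' : (i : ℝ) + 1 ≤ j := by exact_mod_cast hlt
  have h2 := two_mul_triHalf i
  have h2' := two_mul_triHalf j
  rw [abs_sub_comm]
  refine le_trans ?_ (le_abs_self _)
  nlinarith [mul_nonneg (by linarith : (0 : ℝ) ≤ j - i - 1) (by linarith : (0 : ℝ) ≤ j + i - 1)]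

namespace AsUnion

variable {Z : Type*} [PseudoMetricSpace Z] {S : ℕ → Set Z}

lemma dist_eq (p q : AsUnion S) :
    dist p q = dist (p.pt : Z) q.pt + |triHalf p.idx - triHalf q.idx| := rfl

lemma dist_pt_le (p q : AsUnion S) : dist (p.pt : Z) q.pt ≤ dist p q := by
  rw [dist_eq]
  linarith [abs_nonneg (triHalf p.idx - triHalf q.idx)]

lemma abs_triHalf_sub_le (p q : AsUnion S) : |triHalf p.idx - triHalf q.idx| ≤ dist p q := by
  rw [dist_eq]
  linarith [dist_nonneg (x := (p.pt : Z)) (y := q.pt)]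

end AsUnion

section AsUnionAmb

variable {S : ℕ → Set Amb}

lemma AsUnion.abs_pt_sub_le (p q : AsUnion S) (j : ℕ) :
    |(p.pt : Amb) j - (q.pt : Amb) j| ≤ dist p q := by
  rw [← Real.dist_eq]
  exact (BoundedContinuousFunction.dist_coe_le_dist j).trans (AsUnion.dist_pt_le p q)

theorem coasdimLEAux_zero_of_support {A : Set (AsUnion S)} {n : ℕ}
    (hA : ∀ p ∈ A, ∀ j, n ≤ j → (p.pt : Amb) j = 0) : CoasdimLEAux A 0 (n + 1) := by
  let v : AsUnion S → Fin (n + 1) → ℝ := fun p j =>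
    if (j : ℕ) < n then (p.pt : Amb) j else triHalf p.idx
  have hcoord : ∀ p q j, |v p j - v q j| ≤ dist p q := by
    intro p q j
    simp only [v]
    split_ifs
    · exact AsUnion.abs_pt_sub_le p q j
    · exact AsUnion.abs_triHalf_sub_le p q
  refine coasdimLEAux_zero_of_lipschitzOnWith (C := 2) v (LipschitzWith.lipschitzOnWith ?_) ?_
  · refine LipschitzWith.of_dist_le_mul fun p q => ?_
    simpa using (dist_pi_le_iff dist_nonneg).2 fun j => (Real.dist_eq _ _).trans_le (hcoord p q j)
  · intro p hp q hq
    have hpt : dist (p.pt : Amb) q.pt ≤ dist (v p) (v q) := by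
      refine (BoundedContinuousFunction.dist_le dist_nonneg).2 fun j => ?_
      by_cases hj : j < n
      · simpa [v, hj] using dist_le_pi_dist (v p) (v q) ⟨j, by omega⟩
      · simp [hA p hp j (by omega), hA q hq j (by omega)]
    have hlast : |triHalf p.idx - triHalf q.idx| ≤ dist (v p) (v q) := by
      simpa [v, ← Real.dist_eq] using dist_le_pi_dist (v p) (v q) (Fin.last n)
    rw [AsUnion.dist_eq]
    linarith

def levelColorFamily (S : ℕ → Set Amb) (K m N : ℕ) (c : ℝ) : Set (Set (AsUnion S)) :=
  {U | ∃ i, N ≤ i ∧ ∃ z : ℕ → ℤ, U = {p | p.idx = i ∧ ⇑(p.pt : Amb) ∈ colorBox K m c z}}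

variable {K m N : ℕ} {c : ℝ}

lemma uniformlyBdd_levelColorFamily (hc : 0 ≤ c) : UniformlyBdd (levelColorFamily S K m N c) := by
  refine ⟨K * c, ?_⟩
  rintro _ ⟨i, -, z, rfl⟩ p ⟨hpi, hp⟩ q ⟨hqi, hq⟩
  have hlevel : triHalf p.idx - triHalf q.idx = 0 := by rw [hpi, hqi, sub_self]
  rw [AsUnion.dist_eq, hlevel, abs_zero, add_zero]
  refine (BoundedContinuousFunction.dist_le (by positivity)).2 fun j => ?_
  rw [Real.dist_eq]
  exact abs_sub_le_of_mem_colorInterval (hp j) (hq j)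

lemma rDisjoint_levelColorFamily {r : ℝ} (hr : 0 ≤ r) (hrc : r < c) (hcN : c ≤ N) :
    RDisjoint r (levelColorFamily S K m N c) := by
  refine rDisjoint_of_le_dist hr hrc ?_
  rintro _ ⟨i, hi, z, rfl⟩ _ ⟨i', hi', z', rfl⟩ hne p ⟨hpi, hp⟩ q ⟨hqi, hq⟩
  by_cases hii : i = i'
  · subst hii
    obtain ⟨j, hj⟩ := exists_le_abs_sub_of_mem_colorBox (hr.trans hrc.le) hp hq
      (by rintro rfl; exact hne rfl)
    exact hj.trans (AsUnion.abs_pt_sub_le p q j)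
  · calc c ≤ N := hcN
      _ ≤ |triHalf p.idx - triHalf q.idx| :=
        le_abs_triHalf_sub (hpi ▸ hi) (hqi ▸ hi') (hpi ▸ hqi ▸ hii)
      _ ≤ dist p q := AsUnion.abs_triHalf_sub_le p q

lemma IsMultiple.exists_eq_mul {i n : ℕ} {t : ℝ} (h : IsMultiple i t) (hn : n ≤ i) (K : ℕ) :
    ∃ a : ℤ, t = a * (2 ^ n / (K + 1)) := by
  obtain ⟨b, rfl⟩ := h
  refine ⟨b * 2 ^ (i - n) * (K + 1), ?_⟩
  rw [← Nat.sub_add_cancel hn, pow_add, Nat.add_sub_cancel]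
  push_cast
  field_simp

lemma exists_mem_levelColorFamily {n : ℕ} {p : AsUnion S}
    (hp : (p.pt : Amb) ∈ XSet K p.idx p.idx) (hn : n ≤ p.idx) (hN : N ≤ p.idx) :
    ∃ m : Fin (K + 1), ∃ U ∈ levelColorFamily S K m N (2 ^ n / (K + 1)), p ∈ U := by
  have hfin : {j | j < p.idx ∧ ¬ IsMultiple p.idx ((p.pt : Amb) j)}.Finite :=
    (finite_Iio p.idx).subset fun j hj => hj.1
  obtain ⟨m, z, hz⟩ := exists_mem_colorBox (by positivity : (0 : ℝ) < 2 ^ n / (K + 1))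
      (p.pt : Amb) hfin hp.2 fun j hj => by
    by_cases hjp : j < p.idx
    · exact (not_not.mp fun h => hj ⟨hjp, h⟩).exists_eq_mul hn K
    · exact ⟨0, by simp [hp.1 j (not_lt.mp hjp)]⟩
  exact ⟨m, _, ⟨p.idx, hN, z, rfl⟩, rfl, hz⟩

end AsUnionAmb

end AsympPaper

/-- For every `k ∈ ℕ`, `coasdim(X_{ω+k}) ≤ ω + k`. -/
theorem statement_6 (k : ℕ) :
    CoasdimLE (Set.univ : Set (XOmegaPlus k)) (Ordinal.omega0 + (k : Ordinal.{0})) := by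
  refine ⟨Ordinal.omega0, k, Or.inr Ordinal.isSuccLimit_omega0, rfl, ?_⟩
  rw [CoasdimLEAux]
  intro r hr
  obtain ⟨n, hn⟩ := pow_unbounded_of_one_lt (r * (k + 1)) one_lt_two
  have hrc : r < 2 ^ n / (k + 1) := by rw [lt_div_iff₀ (by positivity)]; exact hn
  have hcN : (2 : ℝ) ^ n / (k + 1) ≤ (2 ^ n : ℕ) := by
    push_cast
    exact div_le_self (by positivity) (by linarith [(k.cast_nonneg : (0 : ℝ) ≤ k)])
  have hX : ∀ p : XOmegaPlus k, (AsUnion.pt p : Amb) ∈ XSet k (AsUnion.idx p) (AsUnion.idx p) :=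
    fun p => ((mem_ite_empty_left _ _ _).mp (AsUnion.pt p).2).2
  refine ⟨fun m => levelColorFamily _ k m (2 ^ n) (2 ^ n / (k + 1)), fun m =>
    ⟨fun _ _ => subset_univ _, uniformlyBdd_levelColorFamily (by positivity),
      rDisjoint_levelColorFamily hr.le hrc hcN⟩,
    Or.inr ⟨⟨(0, 2 ^ n + 1), by simpa using Ordinal.natCast_lt_omega0 (2 ^ n + 1),
      Or.inl rfl⟩, ?_⟩⟩
  refine coasdimLEAux_zero_of_support fun p hp j hj => (hX p).1 j (le_trans ?_ hj)
  by_contra! hlow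
  obtain ⟨m, U, hU, hpU⟩ :=
    exists_mem_levelColorFamily (hX p) (n.lt_two_pow_self.le.trans hlow.le) hlow.le
  exact hp.2 (mem_iUnion.2 ⟨m, mem_sUnion.2 ⟨U, hU, hpU⟩⟩)

end
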